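/- In a many-to-one stable matching market, any institution that is undersubscribed (filled below capacity) in some stable matching is assigned exactly the same set of students in every stable matching. -/

import Mathlib

open Finset

/-- A (many-to-one) matching market: acceptability edges, capacities, and
rank functions encoding strict preferences (lower rank = more preferred). -/
structure Market (S I : Type*) where
  E : Finset (S × I)
  q : I → ℕ
  prefS : S → I → ℕ
  prefI : I → S → ℕ

variable {S I : Type*} [DecidableEq S] [DecidableEq I]

def edgesOf (M : Finset (S × I)) (i : I) : Finset (S × I) :=
  M.filter (fun e => e.2 = i)

def assigned (M : Finset (S × I)) (i : I) : Finset S :=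
  (edgesOf M i).image Prod.fst

def IsMatching (mkt : Market S I) (M : Finset (S × I)) : Prop :=
  M ⊆ mkt.E ∧ (∀ s : S, (M.filter (fun e => e.1 = s)).card ≤ 1) ∧
    ∀ i : I, (edgesOf M i).card ≤ mkt.q i

/-- `(s, i)` blocks `M`: it is an acceptable non-matching pair, `s` strictly prefers
`i` to her assignment (being unmatched is worst), and `i` has a free seat or a
student it likes strictly less than `s`. -/
def Blocks (mkt : Market S I) (M : Finset (S × I)) (s : S) (i : I) : Prop :=
  (s, i) ∈ mkt.E ∧ (s, i) ∉ M ∧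
    (∀ i' : I, (s, i') ∈ M → mkt.prefS s i < mkt.prefS s i') ∧
    ((edgesOf M i).card < mkt.q i ∨ ∃ s' ∈ assigned M i, mkt.prefI i s < mkt.prefI i s')

def IsStable (mkt : Market S I) (M : Finset (S × I)) : Prop :=
  IsMatching mkt M ∧ ∀ s i, ¬ Blocks mkt M s i

/-!
Compare two stable matchings `M` and `M'`. Call an edge of `M \ M'` *preferred* if its student
strictly prefers it to her `M'`-assignment, and let `X` and `Y` be the preferred edges of
`M \ M'` and of `M' \ M`. An institution with an edge of `X` is full in `M'` (otherwise that edge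
would block `M'`) and, by strictness of its preferences, has no edge of `Y`; so at every
institution `|Xᵢ| + |Yᵢ| ≤ |(M' \ M)ᵢ|`. Conversely every edge of `M' \ M` outside `Y` belongs to
a student whose `M`-edge lies in `X`, so `|M' \ M| ≤ |X| + |Y|` and the local inequalities are all
equalities. By symmetry `|(M \ M')ᵢ| = |(M' \ M)ᵢ|`, so every institution is filled equally in
all stable matchings; an undersubscribed institution then has no edge of `X` or `Y`, hence no edge
of `M' \ M` or `M \ M'`.
-/

lemma mem_edgesOf {α β : Type*} [DecidableEq β] {M : Finset (α × β)} {e : α × β} {i : β} :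
    e ∈ edgesOf M i ↔ e ∈ M ∧ e.2 = i :=
  mem_filter

lemma edgesOf_mono {α β : Type*} [DecidableEq β] {M N : Finset (α × β)} (h : M ⊆ N) (i : β) :
    edgesOf M i ⊆ edgesOf N i :=
  filter_subset_filter _ h

lemma card_eq_sum_card_edgesOf {α β : Type*} [DecidableEq β] [Fintype β] (M : Finset (α × β)) :
    #M = ∑ i, #(edgesOf M i) :=
  card_eq_sum_card_fiberwise fun _ _ => mem_univ _

/-- `s` strictly prefers `i` to her partner in `M`; being unmatched is worst. -/
def StrictlyPrefers (mkt : Market S I) (M : Finset (S × I)) (s : S) (i : I) : Prop :=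
  ∀ j, (s, j) ∈ M → mkt.prefS s i < mkt.prefS s j

open Classical in
/-- The edges of `M \ M'` whose students strictly prefer them to their partners in `M'`. -/
noncomputable def preferredEdges (mkt : Market S I) (M M' : Finset (S × I)) : Finset (S × I) :=
  (M \ M').filter fun e => StrictlyPrefers mkt M' e.1 e.2

section

variable {mkt : Market S I} {M M' : Finset (S × I)} {s : S} {i j : I}

lemma mem_preferredEdges {e : S × I} :
    e ∈ preferredEdges mkt M M' ↔ e ∈ M ∧ e ∉ M' ∧ StrictlyPrefers mkt M' e.1 e.2 := by
  simp [preferredEdges, and_assoc]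

lemma mem_assigned_of_mem (h : (s, i) ∈ M) : s ∈ assigned M i :=
  mem_image.mpr ⟨(s, i), mem_edgesOf.mpr ⟨h, rfl⟩, rfl⟩

lemma edgesOf_sdiff (M M' : Finset (S × I)) (i : I) :
    edgesOf (M \ M') i = edgesOf M i \ edgesOf M' i := by
  ext e
  simp only [edgesOf, mem_filter, mem_sdiff]
  tauto

lemma preferredEdges_subset_sdiff : preferredEdges mkt M M' ⊆ M \ M' :=
  fun _ he => mem_sdiff.mpr ⟨(mem_preferredEdges.mp he).1, (mem_preferredEdges.mp he).2.1⟩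

lemma IsMatching.eq_of_mem (hM : IsMatching mkt M) (hi : (s, i) ∈ M) (hj : (s, j) ∈ M) :
    i = j :=
  congrArg Prod.snd <| card_le_one.mp (hM.2.1 s) (s, i) (by simp [hi]) (s, j) (by simp [hj])

lemma IsStable.card_edgesOf_eq_and_prefI_le (hM : IsStable mkt M) (hE : (s, i) ∈ mkt.E)
    (hs : (s, i) ∉ M) (hpref : StrictlyPrefers mkt M s i) :
    #(edgesOf M i) = mkt.q i ∧ ∀ t ∈ assigned M i, mkt.prefI i t ≤ mkt.prefI i s := by
  have h := hM.2 s i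
  simp only [Blocks, not_and, not_or, not_exists, not_lt] at h
  obtain ⟨hfull, hle⟩ := h hE hs hpref
  exact ⟨(hM.1.2.2 i).antisymm hfull, fun t ht => hle t ht⟩

lemma IsStable.card_edgesOf_eq_and_prefI_le_of_mem_preferredEdges (hM : IsMatching mkt M)
    (hM' : IsStable mkt M') (h : (s, i) ∈ preferredEdges mkt M M') :
    #(edgesOf M' i) = mkt.q i ∧ ∀ t ∈ assigned M' i, mkt.prefI i t ≤ mkt.prefI i s := by
  obtain ⟨hsM, hsM', hpref⟩ := mem_preferredEdges.mp h
  exact hM'.card_edgesOf_eq_and_prefI_le (hM.1 hsM) hsM' hpref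

lemma exists_mem_preferredEdges_of_mem_edgesOf {e : S × I}
    (he : e ∈ edgesOf (preferredEdges mkt M M') i) : ∃ s, (s, i) ∈ preferredEdges mkt M M' := by
  obtain ⟨heX, rfl⟩ := mem_edgesOf.mp he
  exact ⟨e.1, heX⟩

lemma edgesOf_preferredEdges_eq_empty_of_card_lt (hM : IsMatching mkt M)
    (hM' : IsStable mkt M') (hlt : #(edgesOf M' i) < mkt.q i) :
    edgesOf (preferredEdges mkt M M') i = ∅ := by
  refine eq_empty_of_forall_notMem fun e he => ?_
  obtain ⟨s, hs⟩ := exists_mem_preferredEdges_of_mem_edgesOf he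
  exact hlt.ne (hM'.card_edgesOf_eq_and_prefI_le_of_mem_preferredEdges hM hs).1

lemma edgesOf_preferredEdges_eq_empty_of_nonempty
    (hstrictI : ∀ i, Function.Injective (mkt.prefI i)) (hM : IsStable mkt M)
    (hM' : IsStable mkt M') (hX : (edgesOf (preferredEdges mkt M M') i).Nonempty) :
    edgesOf (preferredEdges mkt M' M) i = ∅ := by
  refine eq_empty_of_forall_notMem fun f hf => ?_
  obtain ⟨s, hs⟩ := exists_mem_preferredEdges_of_mem_edgesOf hX.choose_spec
  obtain ⟨t, ht⟩ := exists_mem_preferredEdges_of_mem_edgesOf hf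
  have htM' : (t, i) ∈ M' := (mem_preferredEdges.mp ht).1
  have hsM : (s, i) ∈ M := (mem_preferredEdges.mp hs).1
  have hts := (hM'.card_edgesOf_eq_and_prefI_le_of_mem_preferredEdges hM.1 hs).2 t
    (mem_assigned_of_mem htM')
  have hst := (hM.card_edgesOf_eq_and_prefI_le_of_mem_preferredEdges hM'.1 ht).2 s
    (mem_assigned_of_mem hsM)
  have : s = t := hstrictI i (hst.antisymm hts)
  exact (mem_preferredEdges.mp hs).2.1 (this ▸ htM')

lemma card_edgesOf_preferredEdges_add_le (hstrictI : ∀ i, Function.Injective (mkt.prefI i))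
    (hM : IsStable mkt M) (hM' : IsStable mkt M') (i : I) :
    #(edgesOf (preferredEdges mkt M M') i) + #(edgesOf (preferredEdges mkt M' M) i) ≤
      #(edgesOf (M' \ M) i) := by
  have hsub : ∀ N N' : Finset (S × I), edgesOf (preferredEdges mkt N N') i ⊆ edgesOf (N \ N') i :=
    fun _ _ => edgesOf_mono preferredEdges_subset_sdiff i
  rcases (edgesOf (preferredEdges mkt M M') i).eq_empty_or_nonempty with hX | hX
  · simpa [hX] using card_le_card (hsub M' M)
  · obtain ⟨e, he⟩ := hX
    obtain ⟨s, hs⟩ := exists_mem_preferredEdges_of_mem_edgesOf he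
    have hfull := (hM'.card_edgesOf_eq_and_prefI_le_of_mem_preferredEdges hM.1 hs).1
    have hloss : #(edgesOf (M \ M') i) ≤ #(edgesOf (M' \ M) i) := by
      rw [edgesOf_sdiff, edgesOf_sdiff, card_sdiff_le_card_sdiff_iff, hfull]
      exact hM.1.2.2 i
    rw [edgesOf_preferredEdges_eq_empty_of_nonempty hstrictI hM hM' ⟨e, he⟩, card_empty,
      add_zero]
    exact (card_le_card (hsub M M')).trans hloss

lemma card_sdiff_le_card_preferredEdges_add (hstrictS : ∀ s, Function.Injective (mkt.prefS s))
    (hM' : IsMatching mkt M') :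
    #(M' \ M) ≤ #(preferredEdges mkt M M') + #(preferredEdges mkt M' M) := by
  classical
  have hsplit := card_filter_add_card_filter_not
    (s := M' \ M) (p := fun e => StrictlyPrefers mkt M e.1 e.2)
  have hY : (M' \ M).filter (fun e => StrictlyPrefers mkt M e.1 e.2) = preferredEdges mkt M' M := by
    simp only [preferredEdges]
  have hrest : #((M' \ M).filter fun e => ¬ StrictlyPrefers mkt M e.1 e.2) ≤
      #(preferredEdges mkt M M') := by
    refine (card_le_card_of_injOn Prod.fst (t := (preferredEdges mkt M M').image Prod.fst)
      ?_ ?_).trans card_image_le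
    · rintro ⟨s, i⟩ he
      simp only [coe_filter, mem_sdiff, StrictlyPrefers, not_forall, not_lt, Set.mem_ofPred_eq] at he
      obtain ⟨⟨hsM', hsM⟩, j, hsj, hji⟩ := he
      have hji' : j ≠ i := by rintro rfl; exact hsM hsj
      refine mem_image.mpr ⟨(s, j), mem_preferredEdges.mpr ⟨hsj, fun h => hji' ?_, ?_⟩, rfl⟩
      · exact hM'.eq_of_mem h hsM'
      · intro k hk
        rw [hM'.eq_of_mem hk hsM']
        exact hji.lt_of_ne fun h => hji' (hstrictS s h)
    · rintro ⟨s, i⟩ he ⟨t, j⟩ hf (rfl : s = t)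
      simp only [coe_filter, mem_sdiff, Set.mem_ofPred_eq] at he hf
      rw [hM'.eq_of_mem he.1.1 hf.1.1]
  rw [hY] at hsplit
  omega

lemma card_edgesOf_preferredEdges_add_eq [Fintype I]
    (hstrictS : ∀ s, Function.Injective (mkt.prefS s))
    (hstrictI : ∀ i, Function.Injective (mkt.prefI i))
    (hM : IsStable mkt M) (hM' : IsStable mkt M') (i : I) :
    #(edgesOf (preferredEdges mkt M M') i) + #(edgesOf (preferredEdges mkt M' M) i) =
      #(edgesOf (M' \ M) i) := by
  have hle := card_edgesOf_preferredEdges_add_le hstrictI hM hM'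
  have hsum : ∑ j, (#(edgesOf (preferredEdges mkt M M') j) +
      #(edgesOf (preferredEdges mkt M' M) j)) = ∑ j, #(edgesOf (M' \ M) j) := by
    refine (sum_le_sum fun j _ => hle j).antisymm ?_
    rw [sum_add_distrib, ← card_eq_sum_card_edgesOf, ← card_eq_sum_card_edgesOf,
      ← card_eq_sum_card_edgesOf]
    exact card_sdiff_le_card_preferredEdges_add hstrictS hM'.1
  exact (sum_eq_sum_iff_of_le fun j _ => hle j).mp hsum i (mem_univ i)

lemma card_edgesOf_eq_of_isStable [Fintype I]
    (hstrictS : ∀ s, Function.Injective (mkt.prefS s))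
    (hstrictI : ∀ i, Function.Injective (mkt.prefI i))
    (hM : IsStable mkt M) (hM' : IsStable mkt M') (i : I) :
    #(edgesOf M i) = #(edgesOf M' i) := by
  have h := card_edgesOf_preferredEdges_add_eq hstrictS hstrictI hM hM' i
  rw [add_comm, card_edgesOf_preferredEdges_add_eq hstrictS hstrictI hM' hM i,
    edgesOf_sdiff, edgesOf_sdiff] at h
  exact card_sdiff_eq_card_sdiff_iff.mp h

end

theorem stmt2_general [Fintype I] (mkt : Market S I)
    (hstrictS : ∀ s, Function.Injective (mkt.prefS s))
    (hstrictI : ∀ i, Function.Injective (mkt.prefI i))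
    (M : Finset (S × I)) (hM : IsStable mkt M) (i : I)
    (hunder : (edgesOf M i).card < mkt.q i) :
    ∀ M' : Finset (S × I), IsStable mkt M' → assigned M' i = assigned M i := by
  intro M' hM'
  have hunder' : #(edgesOf M' i) < mkt.q i :=
    card_edgesOf_eq_of_isStable hstrictS hstrictI hM hM' i ▸ hunder
  have hX := edgesOf_preferredEdges_eq_empty_of_card_lt hM.1 hM' hunder'
  have hY := edgesOf_preferredEdges_eq_empty_of_card_lt hM'.1 hM hunder
  have h := card_edgesOf_preferredEdges_add_eq hstrictS hstrictI hM hM' i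
  have h' := card_edgesOf_preferredEdges_add_eq hstrictS hstrictI hM' hM i
  rw [hX, hY, card_empty, add_zero, eq_comm, card_eq_zero, edgesOf_sdiff,
    sdiff_eq_empty_iff_subset] at h h'
  rw [assigned, assigned, h.antisymm h']

/-- Rural Hospitals: an institution undersubscribed in some stable matching is
assigned the same set of students in every stable matching. -/
theorem stmt2 [Fintype S] [Fintype I] (mkt : Market S I)
    (hstrictS : ∀ s, Function.Injective (mkt.prefS s))
    (hstrictI : ∀ i, Function.Injective (mkt.prefI i))
    (M : Finset (S × I)) (hM : IsStable mkt M) (i : I)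
    (hunder : (edgesOf M i).card < mkt.q i) :
    ∀ M' : Finset (S × I), IsStable mkt M' → assigned M' i = assigned M i :=
  stmt2_general mkt hstrictS hstrictI M hM i hunder
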